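/- arXiv:2006.10124 — 4 statements merged into one kernel-verified Lean document; each statement's English description precedes it below -/
import Mathlib

section
/- For sorted R in [0,1]ⁿ, 0 ≤ V(R) ≤ 1/n!, with equality V(R) = 1/n! if and only if rᵢ = 1 for all i. -/
/-!
Up to the null set of tuples with a repeated coordinate, the unit cube is the union of the `n!`
regions `{s | s ∘ σ monotone}`, `σ` a permutation, which are almost disjoint and all have the
volume of the ordered simplex `V(1, …, 1)`; hence `V(1, …, 1) = 1 / n!`. The bound follows since
`V` is monotone in `r`. If `rᵢ < 1`, a small box of increasing tuples with `sᵢ > rᵢ` lies in the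
simplex but not in the region for `r`, so `V(r) < 1 / n!`.
-/

open MeasureTheory Set Function
open scoped ENNReal Nat

section

variable {ι : Type*} [Fintype ι]

theorem volume_preimage_comp_perm (σ : Equiv.Perm ι) (A : Set (ι → ℝ)) :
    volume ((· ∘ σ) ⁻¹' A) = volume A :=
  (volume_preserving_arrowCongr' σ.symm (MeasurableEquiv.refl ℝ)
    (MeasurePreserving.id volume)).measure_preimage_equiv A

theorem volume_setOf_apply_eq_apply {i j : ι} (hij : i ≠ j) :
    volume {s : ι → ℝ | s i = s j} = 0 := by
  classical
  let L : (ι → ℝ) →ₗ[ℝ] ℝ := (LinearMap.proj i : (ι → ℝ) →ₗ[ℝ] ℝ) - LinearMap.proj j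
  have hker : {s : ι → ℝ | s i = s j} = LinearMap.ker L := by
    ext s; simp [L, sub_eq_zero]
  rw [hker]
  refine Measure.addHaar_submodule volume _ fun htop => ?_
  have : Pi.single i (1 : ℝ) ∈ LinearMap.ker L := htop ▸ Submodule.mem_top
  simp [L, hij.symm] at this

theorem volume_setOf_not_injective : volume {s : ι → ℝ | ¬Injective s} = 0 := by
  refine measure_mono_null (fun s hs => ?_) <| measure_iUnion_null fun i =>
    measure_iUnion_null fun j => measure_iUnion_null fun (hij : i ≠ j) =>
      volume_setOf_apply_eq_apply hij
  obtain ⟨i, j, hs, hij⟩ := not_injective_iff.mp hs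
  exact mem_iUnion₂.mpr ⟨i, j, mem_iUnion.mpr ⟨hij, hs⟩⟩

end

/-- The region whose volume is `V(r)`. -/
def orderedBelow {n : ℕ} (r : Fin n → ℝ) : Set (Fin n → ℝ) :=
  {s | (∀ i, 0 ≤ s i) ∧ Monotone s ∧ ∀ i, s i ≤ r i}

section

variable {n : ℕ}

theorem orderedBelow_mono {r r' : Fin n → ℝ} (h : r ≤ r') : orderedBelow r ⊆ orderedBelow r' :=
  fun _ ⟨h0, hmono, hr⟩ => ⟨h0, hmono, fun i => (hr i).trans (h i)⟩

theorem orderedBelow_one : orderedBelow (1 : Fin n → ℝ) = Icc 0 1 ∩ {s | Monotone s} := by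
  ext s
  simp only [orderedBelow, mem_inter_iff, mem_Icc, Pi.le_def, mem_ofPred_eq, Pi.one_apply]
  tauto

theorem aedisjoint_monotone_comp {σ τ : Equiv.Perm (Fin n)} (h : σ ≠ τ) :
    AEDisjoint volume {s : Fin n → ℝ | Monotone (s ∘ σ)} {s | Monotone (s ∘ τ)} := by
  refine measure_mono_null (fun s ⟨hσ, hτ⟩ => ?_) volume_setOf_not_injective
  exact fun hinj => h <| Equiv.ext (congrFun (hinj.comp_left (Tuple.unique_monotone hσ hτ)))

theorem iUnion_monotone_comp :
    ⋃ σ : Equiv.Perm (Fin n), {s : Fin n → ℝ | Monotone (s ∘ σ)} = univ :=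
  eq_univ_of_forall fun s => mem_iUnion.mpr ⟨Tuple.sort s, Tuple.monotone_sort s⟩

theorem volume_orderedBelow_one : volume (orderedBelow (1 : Fin n → ℝ)) = (n ! : ℝ≥0∞)⁻¹ := by
  let piece (σ : Equiv.Perm (Fin n)) : Set (Fin n → ℝ) := (· ∘ σ) ⁻¹' orderedBelow 1
  have hpiece (σ) : piece σ = Icc 0 1 ∩ {s | Monotone (s ∘ σ)} := by
    ext s
    simp only [piece, orderedBelow_one, mem_preimage, mem_inter_iff, mem_Icc, Pi.le_def,
      comp_apply, Pi.zero_apply, Pi.one_apply, mem_ofPred_eq]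
    rw [σ.forall_congr_right (q := fun i => 0 ≤ s i),
      σ.forall_congr_right (q := fun i => s i ≤ 1)]
  have hcover : ⋃ σ, piece σ = Icc 0 1 := by
    simp only [hpiece, ← inter_iUnion, iUnion_monotone_comp, inter_univ]
  have hmeas (σ) : NullMeasurableSet (piece σ) volume := by
    rw [hpiece]
    exact (measurableSet_Icc.inter
      (isClosed_monotone.preimage (by fun_prop)).measurableSet).nullMeasurableSet
  have hdisj : Pairwise (AEDisjoint volume on piece) := fun σ τ h => by
    simp only [onFun, hpiece]
    exact (aedisjoint_monotone_comp h).mono inter_subset_right inter_subset_right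
  have : (n ! : ℝ≥0∞) * volume (orderedBelow (1 : Fin n → ℝ)) = 1 := by
    calc (n ! : ℝ≥0∞) * volume (orderedBelow (1 : Fin n → ℝ))
        = ∑ σ, volume (piece σ) := by
          simp [piece, volume_preimage_comp_perm, Fintype.card_perm]
      _ = volume (Icc (0 : Fin n → ℝ) 1) := by
          rw [← hcover, measure_iUnion₀ hdisj hmeas, tsum_fintype]
      _ = 1 := by simp [Real.volume_Icc_pi]
  exact ENNReal.eq_inv_of_mul_eq_one_left (by rwa [mul_comm])

theorem pi_Ioo_grid_subset_orderedBelow_one {a δ : ℝ} (ha : 0 ≤ a) (hδ : 0 < δ)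
    (h1 : a + n * δ ≤ 1) :
    univ.pi (fun i : Fin n => Ioo (a + i * δ) (a + (i + 1) * δ)) ⊆ orderedBelow 1 := by
  intro s hs
  simp only [mem_univ_pi, mem_Ioo] at hs
  refine ⟨fun i => ?_, fun i j hij => ?_, fun i => ?_⟩
  · nlinarith [(hs i).1, (i : ℕ).cast_nonneg (α := ℝ)]
  · obtain rfl | hlt := hij.eq_or_lt
    · rfl
    have : (i : ℝ) + 1 ≤ j := by exact_mod_cast hlt
    nlinarith [(hs i).2, (hs j).1]
  · have : (i : ℝ) + 1 ≤ n := by exact_mod_cast i.isLt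
    show s i ≤ 1
    nlinarith [(hs i).2]

theorem volume_orderedBelow_lt_one {r : Fin n → ℝ} (h1 : r ≤ 1) {i : Fin n} (h0 : 0 ≤ r i)
    (hi : r i < 1) : volume (orderedBelow r) < volume (orderedBelow (1 : Fin n → ℝ)) := by
  set δ := (1 - r i) / (n + 1)
  have hδ : 0 < δ := div_pos (by linarith) (by positivity)
  let box : Set (Fin n → ℝ) := univ.pi fun j => Ioo (r i + j * δ) (r i + (j + 1) * δ)
  have hbox : box ⊆ orderedBelow 1 := pi_Ioo_grid_subset_orderedBelow_one h0 hδ <| by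
    have : (n + 1) * δ = 1 - r i := mul_div_cancel₀ _ (by positivity)
    nlinarith
  have hdisj : Disjoint (orderedBelow r) box := disjoint_left.mpr fun s ⟨_, _, hs⟩ hsb => by
    have := (hsb i (mem_univ i)).1
    nlinarith [hs i, (i : ℕ).cast_nonneg (α := ℝ)]
  have hpos : volume box ≠ 0 := by
    rw [Real.volume_pi_Ioo]
    exact Finset.prod_ne_zero_iff.mpr fun j _ => by simp [hδ]
  have hfin : volume (orderedBelow r) ≠ ⊤ :=
    ne_top_of_le_ne_top (by simp [volume_orderedBelow_one, Nat.factorial_ne_zero])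
      (measure_mono (orderedBelow_mono h1))
  calc volume (orderedBelow r) < volume (orderedBelow r) + volume box :=
        ENNReal.lt_add_right hfin hpos
    _ = volume (orderedBelow r ∪ box) :=
        (measure_union hdisj (MeasurableSet.univ_pi fun _ => measurableSet_Ioo)).symm
    _ ≤ volume (orderedBelow 1) := measure_mono (union_subset (orderedBelow_mono h1) hbox)

end

theorem stmt_7_general (n : ℕ) (r : Fin n → ℝ)
    (h0 : ∀ i, 0 ≤ r i) (h1 : ∀ i, r i ≤ 1) :
    0 ≤ (volume {s : Fin n → ℝ | (∀ i, 0 ≤ s i) ∧ Monotone s ∧ ∀ i, s i ≤ r i}).toReal ∧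
    volume {s : Fin n → ℝ | (∀ i, 0 ≤ s i) ∧ Monotone s ∧ ∀ i, s i ≤ r i} ≤
      ENNReal.ofReal (1 / Nat.factorial n) ∧
    (volume {s : Fin n → ℝ | (∀ i, 0 ≤ s i) ∧ Monotone s ∧ ∀ i, s i ≤ r i} =
      ENNReal.ofReal (1 / Nat.factorial n) ↔ ∀ i, r i = 1) := by
  have hV1 : ENNReal.ofReal (1 / n !) = volume (orderedBelow (1 : Fin n → ℝ)) := by
    rw [volume_orderedBelow_one, one_div, ENNReal.ofReal_inv_of_pos (by positivity),
      ENNReal.ofReal_natCast]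
  change 0 ≤ (volume (orderedBelow r)).toReal ∧ volume (orderedBelow r) ≤ _ ∧
    (volume (orderedBelow r) = _ ↔ _)
  rw [hV1]
  refine ⟨ENNReal.toReal_nonneg, measure_mono (orderedBelow_mono h1), fun heq => ?_, fun hr => ?_⟩
  · by_contra! ⟨i, hi⟩
    exact (volume_orderedBelow_lt_one h1 (h0 i) ((h1 i).lt_of_ne hi)).ne heq
  · rw [show r = 1 from funext hr]

theorem stmt_7 (n : ℕ) (r : Fin n → ℝ) (hmono : Monotone r)
    (h0 : ∀ i, 0 ≤ r i) (h1 : ∀ i, r i ≤ 1) :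
    0 ≤ (volume {s : Fin n → ℝ | (∀ i, 0 ≤ s i) ∧ Monotone s ∧ ∀ i, s i ≤ r i}).toReal ∧
    volume {s : Fin n → ℝ | (∀ i, 0 ≤ s i) ∧ Monotone s ∧ ∀ i, s i ≤ r i} ≤
      ENNReal.ofReal (1 / Nat.factorial n) ∧
    (volume {s : Fin n → ℝ | (∀ i, 0 ≤ s i) ∧ Monotone s ∧ ∀ i, s i ≤ r i} =
      ENNReal.ofReal (1 / Nat.factorial n) ↔ ∀ i, r i = 1) :=
  stmt_7_general n r h0 h1
end

section
/- The joint CDF value satisfies the Stuart recursion V(R) = (1/n) Σᵢ₌₁ⁿ (rᵢ - r_{i-1}) V(R₋ᵢ), where r₀ = 0 and R₋ᵢ denotes R with its i-th entry removed (the resulting list need not be sorted; V is interpreted via the same iterated integral formula). -/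
open MeasureTheory intervalIntegral

/-- Iterated integral `V a [r₁,…,rₙ] = ∫ s₁ in a..r₁, ∫ s₂ in s₁..r₂, ⋯ ∫ sₙ in s_{n-1}..rₙ, 1`.
The joint CDF value of the paper is `V 0 R`. -/
noncomputable def V : ℝ → List ℝ → ℝ
  | _, [] => 1
  | a, r :: R => ∫ s in a..r, V s R

lemma V_nil (a : ℝ) : V a [] = 1 := rfl
lemma V_cons (a r : ℝ) (R : List ℝ) : V a (r :: R) = ∫ s in a..r, V s R := rfl

lemma V_continuous : ∀ R : List ℝ, Continuous fun a => V a R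
  | [] => continuous_const
  | r :: R => by
    have h := V_continuous R
    have hd : ∀ a : ℝ, HasDerivAt (fun u => ∫ s in u..r, V s R) (-(V a R)) a := fun a =>
      intervalIntegral.integral_hasDerivAt_left (h.intervalIntegrable a r)
        (h.stronglyMeasurableAtFilter _ _) h.continuousAt
    have : Differentiable ℝ fun a => ∫ s in a..r, V s R := fun a => (hd a).differentiableAt
    simpa only [V_cons] using this.continuous

lemma V_hasDerivAt (r : ℝ) (R : List ℝ) (a : ℝ) :
    HasDerivAt (fun s => V s (r :: R)) (-(V a R)) a := by
  have h := V_continuous R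
  simpa only [V_cons] using
    intervalIntegral.integral_hasDerivAt_left (h.intervalIntegrable a r)
      (h.stronglyMeasurableAtFilter _ _) h.continuousAt

lemma V_part (r1 r2 a : ℝ) (T : List ℝ) :
    (∫ s in a..r1, (V s (r2 :: T) + (r1 - s) * V s T)) = (r1 - a) * V a (r2 :: T) := by
  have h : ∀ s ∈ Set.uIcc a r1, HasDerivAt (fun u => (u - r1) * V u (r2 :: T))
      (V s (r2 :: T) + (r1 - s) * V s T) s := by
    intro s _
    have h1 : HasDerivAt (fun u : ℝ => u - r1) 1 s := (hasDerivAt_id s).sub_const r1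
    have h2 := V_hasDerivAt r2 T s
    have : HasDerivAt (fun u => (u - r1) * V u (r2 :: T)) (1 * V s (r2 :: T) + (s - r1) * -V s T) s :=
      h1.mul h2
    convert this using 1
    ring
  have hint : IntervalIntegrable (fun s => V s (r2 :: T) + (r1 - s) * V s T) volume a r1 :=
    ((V_continuous (r2 :: T)).add
      ((continuous_const.sub continuous_id).mul (V_continuous T))).intervalIntegrable _ _
  rw [intervalIntegral.integral_eq_sub_of_hasDerivAt h hint]
  ring

lemma key (n : ℕ) : ∀ (f : ℕ → ℝ) (a : ℝ),
    (n : ℝ) * V a (List.ofFn fun i : Fin n => f i) =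
      ∑ i ∈ Finset.range n, (f i - if i = 0 then a else f (i - 1)) *
        V a ((List.ofFn fun i : Fin n => f i).eraseIdx i) := by
  induction n with
  | zero => intro f a; simp
  | succ n IH =>
    intro f a
    have hL : (List.ofFn fun i : Fin (n + 1) => f i)
        = f 0 :: (List.ofFn fun i : Fin n => f (↑i + 1)) := by
      simp [List.ofFn_succ, Fin.val_succ]
    rcases Nat.eq_zero_or_pos n with h0 | hpos
    · subst h0
      simp [hL, V_cons, V_nil]
    · obtain ⟨m, rfl⟩ : ∃ m, n = m + 1 := ⟨n - 1, (Nat.succ_pred_eq_of_pos hpos).symm⟩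
      have hL'' : (List.ofFn fun i : Fin (m + 1) => f (↑i + 1))
          = f 1 :: (List.ofFn fun i : Fin m => f (↑i + 1 + 1)) := by
        simp [List.ofFn_succ, Fin.val_succ]
      set L' : List ℝ := List.ofFn fun i : Fin (m + 1) => f (↑i + 1) with hL'def
      set T : List ℝ := List.ofFn fun i : Fin m => f (↑i + 1 + 1) with hTdef
      have e2 : ∀ s : ℝ, (↑(m + 1) : ℝ) * V s L'
          = (∑ i ∈ Finset.range m,
              (f (i + 1 + 1) - f (i + 1)) * V s (L'.eraseIdx (i + 1)))
            + (f 1 - s) * V s T := by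
        intro s
        have h := IH (fun i => f (i + 1)) s
        rw [Finset.sum_range_succ'] at h
        simpa [hL''] using h
      have h1 : IntervalIntegrable (fun s => ∑ i ∈ Finset.range m,
          (f (i + 1 + 1) - f (i + 1)) * V s (L'.eraseIdx (i + 1))) volume a (f 0) :=
        (continuous_finset_sum _ fun i _ =>
          continuous_const.mul (V_continuous _)).intervalIntegrable _ _
      have h2 : IntervalIntegrable (fun s => (f 1 - f 0) * V s T) volume a (f 0) :=
        (continuous_const.mul (V_continuous T)).intervalIntegrable _ _
      have h3 : IntervalIntegrable (fun s => V s L' + (f 0 - s) * V s T) volume a (f 0) :=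
        ((V_continuous L').add
          ((continuous_const.sub continuous_id).mul (V_continuous T))).intervalIntegrable _ _
      have big : (∫ s in a..f 0, ((↑(m + 1) : ℝ) * V s L' + V s L'))
          = (∫ s in a..f 0, ∑ i ∈ Finset.range m,
              (f (i + 1 + 1) - f (i + 1)) * V s (L'.eraseIdx (i + 1)))
            + ((f 1 - f 0) * ∫ s in a..f 0, V s T)
            + (∫ s in a..f 0, (V s L' + (f 0 - s) * V s T)) := by
        rw [← intervalIntegral.integral_const_mul (f 1 - f 0),
          ← intervalIntegral.integral_add h1 h2,
          ← intervalIntegral.integral_add (h1.add h2) h3]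
        apply intervalIntegral.integral_congr
        intro s _
        simp only []
        rw [e2 s]
        ring
      rw [hL, V_cons]
      rw [Finset.sum_range_succ', Finset.sum_range_succ']
      have lhs_eq : (↑(m + 1 + 1) : ℝ) * ∫ s in a..f 0, V s L'
          = ∫ s in a..f 0, ((↑(m + 1) : ℝ) * V s L' + V s L') := by
        rw [← intervalIntegral.integral_const_mul]
        congr 1
        funext s
        push_cast
        ring
      rw [lhs_eq, big]
      rw [intervalIntegral.integral_finset_sum
        (f := fun i s => (f (i + 1 + 1) - f (i + 1)) * V s (L'.eraseIdx (i + 1)))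
        (fun i _ => (continuous_const.mul (V_continuous _)).intervalIntegrable _ _)]
      rw [hL'', V_part (f 0) (f 1) a T]
      simp only [intervalIntegral.integral_const_mul, ← V_cons, List.eraseIdx_cons_succ,
        List.eraseIdx_cons_zero, Nat.succ_ne_zero, if_false, Nat.succ_sub_one,
        Nat.add_sub_cancel, if_pos]

theorem stmt_8 (n : ℕ) (hn : 1 ≤ n) (r : ℕ → ℝ) (hr0 : r 0 = 0)
    (hmono : ∀ i, i < n → r i ≤ r (i + 1)) (h1 : r n ≤ 1) :
    V 0 (List.ofFn fun i : Fin n => r (i + 1)) =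
      (1 / n) * ∑ i ∈ Finset.range n,
        (r (i + 1) - r i) * V 0 ((List.ofFn fun j : Fin n => r (j + 1)).eraseIdx i) := by
  have hkey := key n (fun i => r (i + 1)) 0
  have hn' : (n : ℝ) ≠ 0 := Nat.cast_ne_zero.mpr (by omega)
  have hsum : (∑ i ∈ Finset.range n, (r (i + 1) - if i = 0 then (0 : ℝ) else r (i - 1 + 1)) *
        V 0 ((List.ofFn fun j : Fin n => r (↑j + 1)).eraseIdx i))
      = ∑ i ∈ Finset.range n,
          (r (i + 1) - r i) * V 0 ((List.ofFn fun j : Fin n => r (↑j + 1)).eraseIdx i) := by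
    refine Finset.sum_congr rfl fun i _ => ?_
    rcases Nat.eq_zero_or_pos i with rfl | hp
    · simp [hr0]
    · have hi : i - 1 + 1 = i := Nat.succ_pred_eq_of_pos hp
      simp [Nat.pos_iff_ne_zero.mp hp, hi]
  rw [hsum] at hkey
  rw [← hkey, one_div, inv_mul_cancel_left₀ hn']
end

section
/- The joint CDF value admits the reversed-order representation: V(R) = ∫₀^{rₙ} ∫₀^{min(r_{n-1}, sₙ)} ⋯ ∫₀^{min(r₁, s₂)} ds₁ ds₂ ⋯ ds_n. -/
open MeasureTheory intervalIntegral

/-- Reversed iterated integral: `W b [rₙ,…,r₁] = ∫ sₙ in 0..min rₙ b, ∫ s_{n-1} in 0..min r_{n-1} sₙ, ⋯ 1`. -/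
noncomputable def W : ℝ → List ℝ → ℝ
  | _, [] => 1
  | b, r :: R => ∫ s in (0:ℝ)..(min r b), W s R

/-!
Both sides integrate `1` over the truncated simplex `{s₁ ≤ ⋯ ≤ sₙ, sᵢ ≤ rᵢ}`, once integrating
`s₁` outermost and once `sₙ` outermost. Giving the reversed integral a variable lower limit `a`
(`Wfrom a b`, with `W = Wfrom 0`), `V a R = Wfrom a b R.reverse` follows by induction on `R`: the
outermost variable of `V` is moved to the innermost position of the reversed integral by one
Fubini swap over a triangle `a ≤ s < t` per remaining variable.
-/

theorem continuous_parametric_intervalIntegral_of_continuous₂ {X E : Type*} [TopologicalSpace X]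
    [NormedAddCommGroup E] [NormedSpace ℝ E] {f : X → ℝ → E} (hf : Continuous f.uncurry)
    {u v : X → ℝ} (hu : Continuous u) (hv : Continuous v) :
    Continuous fun x ↦ ∫ t in u x..v x, f x t := by
  have hint : ∀ x a b, IntervalIntegrable (f x) volume a b := fun x _ _ ↦
    (hf.uncurry_left x).intervalIntegrable _ _
  simp_rw [← integral_interval_sub_left (hint _ 0 (v _)) (hint _ 0 (u _))]
  fun_prop

theorem integral_integral_swap_triangle {E : Type*} [NormedAddCommGroup E] [NormedSpace ℝ E]
    [CompleteSpace E] {f : ℝ → ℝ → E} (hf : Continuous f.uncurry) {a p q : ℝ}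
    (hap : a ≤ p) (hpq : p ≤ q) :
    ∫ s in a..p, ∫ t in s..q, f s t = ∫ t in a..q, ∫ s in a..min p t, f s t := by
  -- Extending `f` by zero off the triangle `s < t` reduces the swap to Fubini on a rectangle.
  set g : ℝ → ℝ → E := fun s t ↦ (Set.Ioi s).indicator (f s) t
  have hg_left (s t : ℝ) : g s t = (Set.Iio t).indicator (f · t) s := by
    simp [g, Set.indicator]
  have hg_int : IntegrableOn g.uncurry (Set.uIoc a p ×ˢ Set.uIoc a q) := by
    have hg : g.uncurry = {z : ℝ × ℝ | z.1 < z.2}.indicator f.uncurry := by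
      ext z; simp [g, Set.indicator, Function.uncurry]
    rw [hg]
    refine IntegrableOn.indicator ?_ (measurableSet_lt measurable_fst measurable_snd)
    rw [Set.uIoc_of_le hap, Set.uIoc_of_le (hap.trans hpq)]
    exact (hf.continuousOn.integrableOn_compact (isCompact_Icc.prod isCompact_Icc)).mono_set
      (Set.prod_mono Set.Ioc_subset_Icc_self Set.Ioc_subset_Icc_self)
  calc ∫ s in a..p, ∫ t in s..q, f s t = ∫ s in a..p, ∫ t in a..q, g s t := by
        refine integral_congr fun s hs ↦ ?_
        rw [Set.uIcc_of_le hap] at hs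
        rw [integral_of_le (hs.2.trans hpq), integral_of_le (hap.trans hpq),
          setIntegral_indicator measurableSet_Ioi, Set.Ioc_inter_Ioi, sup_of_le_right hs.1]
    _ = ∫ t in a..q, ∫ s in a..p, g s t := intervalIntegral_intervalIntegral_swap hg_int
    _ = ∫ t in a..q, ∫ s in a..min p t, f s t := by
        refine integral_congr fun t ht ↦ ?_
        rw [Set.uIcc_of_le (hap.trans hpq)] at ht
        simp_rw [hg_left]
        rw [integral_of_le hap, integral_of_le (le_min hap ht.1),
          setIntegral_indicator measurableSet_Iio, ← Set.Ioc_inter_Iic]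
        exact setIntegral_congr_set ((ae_eq_refl _).inter Iio_ae_eq_Iic)

noncomputable def Wfrom : ℝ → ℝ → List ℝ → ℝ
  | _, _, [] => 1
  | a, b, r :: R => ∫ s in a..min r b, Wfrom a s R

theorem Wfrom_zero (b : ℝ) (L : List ℝ) : Wfrom 0 b L = W b L := by
  induction L generalizing b with
  | nil => rfl
  | cons r L ih => simp only [Wfrom, W, ih]

theorem continuous_Wfrom (L : List ℝ) : Continuous (fun a b ↦ Wfrom a b L).uncurry := by
  induction L with
  | nil => exact continuous_const
  | cons r L ih =>
    show Continuous fun p : ℝ × ℝ ↦ ∫ s in p.1..min r p.2, Wfrom p.1 s L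
    have hf : Continuous (fun (p : ℝ × ℝ) (s : ℝ) ↦ Wfrom p.1 s L).uncurry :=
      ih.comp (continuous_fst.fst.prodMk continuous_snd)
    exact continuous_parametric_intervalIntegral_of_continuous₂ hf continuous_fst (by fun_prop)

theorem integral_Wfrom_eq_Wfrom_append (L : List ℝ) {a b r : ℝ} (har : a ≤ r) (hab : a ≤ b)
    (hrL : ∀ x ∈ L, r ≤ x) :
    ∫ s in a..min r b, Wfrom s b L = Wfrom a b (L ++ [r]) := by
  induction L generalizing b with
  | nil => rfl
  | cons c L ih =>
    have hrc : r ≤ c := hrL c List.mem_cons_self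
    calc ∫ s in a..min r b, Wfrom s b (c :: L)
        = ∫ t in a..min c b, ∫ s in a..min (min r b) t, Wfrom s t L :=
          integral_integral_swap_triangle (continuous_Wfrom L) (le_min har hab)
            (min_le_min_right b hrc)
      _ = ∫ t in a..min c b, Wfrom a t (L ++ [r]) := by
          refine integral_congr fun t ht ↦ ?_
          rw [Set.uIcc_of_le (le_min (har.trans hrc) hab)] at ht
          have htb : t ≤ b := ht.2.trans (min_le_right c b)
          rw [min_right_comm, min_eq_left ((min_le_right r t).trans htb)]
          exact ih ht.1 fun x hx ↦ hrL x (List.mem_cons_of_mem c hx)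
      _ = Wfrom a b (c :: L ++ [r]) := rfl

theorem V_eq_Wfrom_reverse (R : List ℝ) {a b : ℝ} (haR : ∀ x ∈ R, a ≤ x) (hRb : ∀ x ∈ R, x ≤ b)
    (hR : R.Pairwise (· ≤ ·)) : V a R = Wfrom a b R.reverse := by
  induction R generalizing a with
  | nil => rfl
  | cons r R ih =>
    obtain ⟨hrR, hR⟩ := List.pairwise_cons.1 hR
    have har : a ≤ r := haR r List.mem_cons_self
    have hrb : r ≤ b := hRb r List.mem_cons_self
    calc V a (r :: R) = ∫ s in a..min r b, Wfrom s b R.reverse := by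
          rw [min_eq_left hrb]
          refine integral_congr fun s hs ↦ ?_
          rw [Set.uIcc_of_le har] at hs
          exact ih (fun x hx ↦ hs.2.trans (hrR x hx))
            (fun x hx ↦ hRb x (List.mem_cons_of_mem r hx)) hR
      _ = Wfrom a b (r :: R).reverse := by
          rw [List.reverse_cons]
          exact integral_Wfrom_eq_Wfrom_append _ har (har.trans hrb)
            fun x hx ↦ hrR x (List.mem_reverse.1 hx)

theorem stmt_9 (n : ℕ) (r : Fin n → ℝ) (hmono : Monotone r)
    (h0 : ∀ i, 0 ≤ r i) (h1 : ∀ i, r i ≤ 1) :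
    V 0 (List.ofFn r) = W 1 (List.ofFn r).reverse := by
  rw [← Wfrom_zero]
  refine V_eq_Wfrom_reverse _ ?_ ?_ (List.sortedLE_ofFn_iff.2 hmono).pairwise
  · simpa [List.mem_ofFn] using h0
  · simpa [List.mem_ofFn] using h1
end

section
/- The Aerts recursion computes V: defining T₀ = 1 and T_k = Σᵢ₌₁^k (-1)^{i-1} (T_{k-i}/i!) (r_{n-k+1})^i, one has Tₙ = V(R). -/
open MeasureTheory intervalIntegral

lemma V_key (L : List ℝ) : ∀ x : ℝ,
    V x L = ∑ i ∈ Finset.range (L.length + 1),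
      (-x) ^ i / (Nat.factorial i) * V 0 (L.drop i) := by
  induction L with
  | nil => intro x; simp [V]
  | cons r L ih =>
    have hform : ∀ x : ℝ, V x (r :: L) =
        ∑ i ∈ Finset.range (L.length + 1),
          ((-1 : ℝ) ^ i / (Nat.factorial i) * V 0 (L.drop i)) *
            ((r ^ (i + 1) - x ^ (i + 1)) / (i + 1)) := by
      intro x
      show (∫ s in x..r, V s L) = _
      rw [intervalIntegral.integral_congr
        (g := fun s => ∑ i ∈ Finset.range (L.length + 1),
          ((-1 : ℝ) ^ i / (Nat.factorial i) * V 0 (L.drop i)) * s ^ i) ?_]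
      · rw [intervalIntegral.integral_finset_sum]
        · refine Finset.sum_congr rfl fun i _ => ?_
          rw [intervalIntegral.integral_const_mul, integral_pow]
        · intro i _
          exact (continuous_const.mul (continuous_pow i)).intervalIntegrable _ _
      · intro s _
        show V s L = _
        rw [ih s]
        refine Finset.sum_congr rfl fun i _ => ?_
        rw [neg_pow]
        ring
    intro x
    rw [hform x]
    conv_rhs => rw [Finset.sum_range_succ']
    simp only [List.drop_succ_cons, List.drop_zero, pow_zero, Nat.factorial_zero,
      Nat.cast_one, List.length_cons]
    rw [hform 0]
    rw [one_div_one, one_mul, ← Finset.sum_add_distrib]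
    refine Finset.sum_congr rfl fun i _ => ?_
    have hfac : ((i + 1).factorial : ℝ) = (i + 1) * i.factorial := by
      rw [Nat.factorial_succ]; push_cast; ring
    have h1 : (i.factorial : ℝ) ≠ 0 := Nat.cast_ne_zero.mpr i.factorial_ne_zero
    have h2 : ((i : ℝ) + 1) ≠ 0 := by positivity
    rw [neg_pow x, hfac]
    field_simp
    ring

theorem stmt_13 (n : ℕ) (r : ℕ → ℝ) (h0 : 0 ≤ r 1)
    (hmono : ∀ i, 1 ≤ i → i < n → r i ≤ r (i + 1)) (h1 : r n ≤ 1)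
    (T : ℕ → ℝ) (hT0 : T 0 = 1)
    (hTk : ∀ k, 1 ≤ k → k ≤ n →
      T k = ∑ i ∈ Finset.Icc 1 k,
        (-1 : ℝ) ^ (i - 1) * (T (k - i) / Nat.factorial i) * (r (n - k + 1)) ^ i) :
    T n = V 0 (List.ofFn fun i : Fin n => r (i + 1)) := by
  set L : ℕ → List ℝ := fun k => List.ofFn (fun i : Fin k => r (n - k + 1 + i)) with hL
  have hlen : ∀ k, (L k).length = k := by intro k; simp [hL]
  have hdrop : ∀ k i, i ≤ k → k ≤ n → (L k).drop i = L (k - i) := by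
    intro k i hik hkn
    apply List.ext_getElem
    · simp only [hL, List.length_drop, List.length_ofFn]
    · intro j h1 h2
      simp only [hL, List.getElem_drop, List.getElem_ofFn]
      congr 1
      simp only [hL, List.length_drop, List.length_ofFn] at h1 h2
      omega
  have hcons : ∀ k, 1 ≤ k → k ≤ n → L k = r (n - k + 1) :: L (k - 1) := by
    intro k hk1 hkn
    apply List.ext_getElem
    · simp only [hL, List.length_ofFn, List.length_cons]
      omega
    · intro j h1 h2
      simp only [hL, List.length_ofFn] at h1
      match j with
      | 0 => simp [hL]
      | j + 1 =>
        simp only [hL, List.getElem_cons_succ, List.getElem_ofFn]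
        congr 1
        omega
  have key : ∀ k, k ≤ n → T k = V 0 (L k) := by
    intro k
    induction k using Nat.strong_induction_on with
    | _ k ih =>
      intro hkn
      rcases Nat.eq_zero_or_pos k with rfl | hk1
      · simp only [hL, List.ofFn_zero]
        simpa [V] using hT0
      · set x := r (n - k + 1) with hx
        have h0V : V x (L k) = 0 := by
          rw [hcons k hk1 hkn]
          show (∫ s in x..x, V s (L (k - 1))) = 0
          exact intervalIntegral.integral_same
        have hsum := V_key (L k) x
        rw [h0V, hlen, Finset.sum_range_succ'] at hsum
        simp only [List.drop_zero, pow_zero, Nat.factorial_zero, Nat.cast_one] at hsum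
        have hV0 : V 0 (L k) =
            -∑ i ∈ Finset.range k, (-x) ^ (i + 1) / ((i + 1).factorial : ℝ) *
              V 0 ((L k).drop (i + 1)) := by linarith [hsum]
        rw [hTk k hk1 hkn, hV0, ← Finset.Ico_add_one_right_eq_Icc, Finset.sum_Ico_eq_sum_range, ← Finset.sum_neg_distrib]
        refine Finset.sum_congr (by norm_num) fun i hi => ?_
        have hik : i < k := Finset.mem_range.mp (by simpa using hi)
        rw [hdrop k (i + 1) (by omega) hkn]
        rw [ih (k - (1 + i)) (by omega) (by omega)]
        rw [show 1 + i - 1 = i by omega, show k - (i + 1) = k - (1 + i) by omega]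
        rw [neg_pow, show (1 : ℕ) + i = i + 1 by omega]
        ring
  have hLn : L n = List.ofFn fun i : Fin n => r (i + 1) := by
    simp only [hL]
    apply congrArg
    funext i
    congr 1
    omega
  rw [key n le_rfl, hLn]
end
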